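/- Let p, q be reals with p > 1 and q > 1, let n be a natural number, and on ℝ^{n+1} with standard basis e_0, …, e_n define A·e_k = √([n−k]_{p,q}·[k+1]_{p,q})·e_{k+1} (A·e_n = 0) and B·e_k = √([n−k+1]_{p,q}·[k]_{p,q})·e_{k−1} (B·e_0 = 0). Then the representation is irreducible: every linear subspace W ⊆ ℝ^{n+1} that is invariant under both A and B is either {0} or all of ℝ^{n+1}. (This is the claim that for generic deformation parameters the Gel'fand–Zetlin patterns (3.1) span a finite-dimensional irreducible U_{p,q}[gl(2)]-module.) -/
import Mathlib


/-- The two-parameter bracket `[x]_{p,q} = (q^x - p^(-x))/(q - p⁻¹)`. -/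
noncomputable def pqBracket (p q : ℝ) (x : ℤ) : ℝ := (q ^ x - p ^ (-x)) / (q - p⁻¹)

/-- The standard basis vector `e_k` of `ℝ^{n+1}`. -/
def stdVec (n : ℕ) (k : Fin (n + 1)) : Fin (n + 1) → ℝ := Pi.single k 1

lemma pqBracket_pos {p q : ℝ} (hp : 1 < p) (hq : 1 < q) {x : ℤ} (hx : 0 < x) :
    0 < pqBracket p q x := by
  have h1 : 1 < q ^ x := one_lt_zpow₀ hq hx
  have h2 : p ^ (-x) < 1 := by
    rw [zpow_neg]
    exact inv_lt_one_of_one_lt₀ (one_lt_zpow₀ hp hx)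
  have h3 : p⁻¹ < 1 := inv_lt_one_of_one_lt₀ hp
  exact div_pos (by linarith) (by linarith)

/-- For generic deformation parameters the Gel'fand–Zetlin module of `U_{p,q}[gl(2)]` is
irreducible: any subspace invariant under the raising and lowering operators is trivial. -/
theorem gz_module_irreducible (p q : ℝ) (hp : 1 < p) (hq : 1 < q) (n : ℕ)
    (A B : Module.End ℝ (Fin (n + 1) → ℝ))
    (hA : ∀ k : Fin (n + 1),
      A (stdVec n k) =
        if h : (k : ℕ) < n then
          Real.sqrt (pqBracket p q ((n : ℤ) - ((k : ℕ) : ℤ)) *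
              pqBracket p q (((k : ℕ) : ℤ) + 1)) •
            stdVec n (⟨(k : ℕ) + 1, by omega⟩ : Fin (n + 1))
        else 0)
    (hB : ∀ k : Fin (n + 1),
      B (stdVec n k) =
        if h : 0 < (k : ℕ) then
          Real.sqrt (pqBracket p q ((n : ℤ) - ((k : ℕ) : ℤ) + 1) *
              pqBracket p q ((k : ℕ) : ℤ)) •
            stdVec n (⟨(k : ℕ) - 1, by omega⟩ : Fin (n + 1))
        else 0) :
    ∀ W : Submodule ℝ (Fin (n + 1) → ℝ),
      (∀ w ∈ W, A w ∈ W) → (∀ w ∈ W, B w ∈ W) → W = ⊥ ∨ W = ⊤ := by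
  intro W hAW hBW
  by_cases hbot : W = ⊥
  · exact Or.inl hbot
  right
  -- decomposition of a vector into standard basis vectors
  have hdecomp : ∀ v : Fin (n + 1) → ℝ, v = ∑ i : Fin (n + 1), v i • stdVec n i := by
    intro v
    funext j
    simp [stdVec, Pi.single_apply, Finset.sum_apply]
  -- coordinate formula for B
  have hBc : ∀ (v : Fin (n + 1) → ℝ) (j : Fin (n + 1)) (hj : (j : ℕ) < n),
      B v j = Real.sqrt (pqBracket p q ((n : ℤ) - (((j : ℕ) + 1 : ℕ) : ℤ) + 1) *
          pqBracket p q (((j : ℕ) + 1 : ℕ) : ℤ)) * v ⟨(j : ℕ) + 1, by omega⟩ := by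
    intro v j hj
    conv_lhs => rw [hdecomp v]
    rw [map_sum]
    simp only [map_smul]
    rw [Finset.sum_apply]
    rw [Finset.sum_eq_single (⟨(j : ℕ) + 1, by omega⟩ : Fin (n + 1))]
    · rw [hB]
      simp only [dif_pos (show 0 < ((⟨(j : ℕ) + 1, by omega⟩ : Fin (n + 1)) : ℕ) by simp)]
      simp [stdVec, Pi.single_apply, mul_comm]
    · intro i _ hi
      rw [hB i]
      by_cases h0 : 0 < (i : ℕ)
      · rw [dif_pos h0]
        have : j ≠ (⟨(i : ℕ) - 1, by omega⟩ : Fin (n + 1)) := by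
          intro hcontra
          apply hi
          have : (j : ℕ) = (i : ℕ) - 1 := by rw [hcontra]
          apply Fin.ext
          simp only []
          omega
        simp [stdVec, Pi.single_apply, this]
      · rw [dif_neg h0]; simp
    · intro h; exact absurd (Finset.mem_univ _) h
  -- B v vanishes at the top coordinate
  have hBtop : ∀ (v : Fin (n + 1) → ℝ) (j : Fin (n + 1)), (j : ℕ) = n → B v j = 0 := by
    intro v j hj
    conv_lhs => rw [hdecomp v]
    rw [map_sum]
    simp only [map_smul]
    rw [Finset.sum_apply]
    apply Finset.sum_eq_zero
    intro i _
    rw [hB i]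
    by_cases h0 : 0 < (i : ℕ)
    · rw [dif_pos h0]
      have : j ≠ (⟨(i : ℕ) - 1, by omega⟩ : Fin (n + 1)) := by
        intro hcontra
        have : (j : ℕ) = (i : ℕ) - 1 := by rw [hcontra]
        have hi := i.isLt
        omega
      simp [stdVec, Pi.single_apply, this]
    · rw [dif_neg h0]; simp
  -- key: if W contains a vector with top nonzero coordinate m, then e_0 ∈ W
  have key : ∀ m : ℕ, ∀ _ : m ≤ n, ∀ v, v ∈ W → v ⟨m, by omega⟩ ≠ 0 →
      (∀ j : Fin (n + 1), m < (j : ℕ) → v j = 0) →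
      stdVec n ⟨0, by omega⟩ ∈ W := by
    intro m
    induction m with
    | zero =>
      intro _ v hvW hv0 hvj
      have hv : (v ⟨0, by omega⟩)⁻¹ • v = stdVec n ⟨0, by omega⟩ := by
        funext j
        by_cases hj : (j : ℕ) = 0
        · have hje : j = (⟨0, by omega⟩ : Fin (n + 1)) := Fin.ext hj
          rw [hje]
          simp only [stdVec, Pi.smul_apply, smul_eq_mul, Pi.single_eq_same, mul_one]
          exact inv_mul_cancel₀ hv0
        · have hjne : j ≠ (⟨0, by omega⟩ : Fin (n + 1)) := by
            intro hcontra
            apply hj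
            rw [hcontra]
          have hjne' : j ≠ 0 := hjne
          simp [stdVec, Pi.single_apply, hjne', hvj j (by omega)]
      rw [← hv]
      exact W.smul_mem _ hvW
    | succ m ih =>
      intro hm v hvW hv0 hvj
      refine ih (by omega) (B v) (hBW v hvW) ?_ ?_
      · rw [hBc v ⟨m, by omega⟩ (by exact Nat.lt_of_succ_le hm)]
        have harg : 0 < pqBracket p q ((n : ℤ) - ((m + 1 : ℕ) : ℤ) + 1) *
            pqBracket p q ((m + 1 : ℕ) : ℤ) := by
          apply mul_pos
          · apply pqBracket_pos hp hq
            push_cast; omega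
          · apply pqBracket_pos hp hq
            push_cast; omega
        have hs : Real.sqrt (pqBracket p q ((n : ℤ) - ((m + 1 : ℕ) : ℤ) + 1) *
            pqBracket p q ((m + 1 : ℕ) : ℤ)) ≠ 0 :=
          ne_of_gt (Real.sqrt_pos.mpr harg)
        exact mul_ne_zero hs hv0
      · intro j hj
        by_cases hjn : (j : ℕ) < n
        · rw [hBc v j hjn, hvj ⟨(j : ℕ) + 1, by omega⟩ (by simp; omega), mul_zero]
        · exact hBtop v j (by omega)
  -- W contains e_0
  obtain ⟨w, hwW, hw0⟩ := Submodule.exists_mem_ne_zero_of_ne_bot hbot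
  have hS : (Finset.univ.filter (fun i : Fin (n + 1) => w i ≠ 0)).Nonempty := by
    by_contra h
    apply hw0
    funext i
    by_contra hi
    exact h ⟨i, Finset.mem_filter.mpr ⟨Finset.mem_univ i, hi⟩⟩
  set m := (Finset.univ.filter (fun i : Fin (n + 1) => w i ≠ 0)).max' hS with hm
  have hmmem := (Finset.univ.filter (fun i : Fin (n + 1) => w i ≠ 0)).max'_mem hS
  rw [Finset.mem_filter] at hmmem
  have he0 : stdVec n ⟨0, by omega⟩ ∈ W := by
    refine key (m : ℕ) (by omega) w hwW ?_ ?_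
    · have : (⟨(m : ℕ), by omega⟩ : Fin (n + 1)) = m := Fin.ext rfl
      rw [this]
      exact hmmem.2
    · intro j hj
      by_contra hjne
      have : j ≤ m := Finset.le_max' _ j (Finset.mem_filter.mpr ⟨Finset.mem_univ j, hjne⟩)
      have : (j : ℕ) ≤ (m : ℕ) := this
      omega
  -- all basis vectors are in W
  have estep : ∀ k : ℕ, (hk : k ≤ n) → stdVec n ⟨k, by omega⟩ ∈ W := by
    intro k
    induction k with
    | zero => intro _; exact he0
    | succ k ih =>
      intro hk
      have h1 := ih (by omega)
      have h2 := hAW _ h1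
      rw [hA ⟨k, by omega⟩] at h2
      simp only [dif_pos (show ((⟨k, by omega⟩ : Fin (n + 1)) : ℕ) < n from hk)] at h2
      have harg : 0 < pqBracket p q ((n : ℤ) - ((k : ℕ) : ℤ)) *
          pqBracket p q (((k : ℕ) : ℤ) + 1) := by
        apply mul_pos
        · apply pqBracket_pos hp hq; push_cast; omega
        · apply pqBracket_pos hp hq; push_cast; omega
      have hs : Real.sqrt (pqBracket p q ((n : ℤ) - ((k : ℕ) : ℤ)) *
          pqBracket p q (((k : ℕ) : ℤ) + 1)) ≠ 0 := ne_of_gt (Real.sqrt_pos.mpr harg)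
      have h3 := W.smul_mem (Real.sqrt (pqBracket p q ((n : ℤ) - ((k : ℕ) : ℤ)) *
          pqBracket p q (((k : ℕ) : ℤ) + 1)))⁻¹ h2
      rw [smul_smul, inv_mul_cancel₀ hs, one_smul] at h3
      exact h3
  -- conclude W = ⊤
  rw [Submodule.eq_top_iff']
  intro x
  rw [hdecomp x]
  apply Submodule.sum_mem
  intro i _
  apply W.smul_mem
  have : (⟨(i : ℕ), i.isLt⟩ : Fin (n + 1)) = i := Fin.ext rfl
  rw [← this]
  exact estep (i : ℕ) (by omega)
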